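/- arXiv:1509.08813 — 2 statements merged into one kernel-verified Lean document; each statement's English description precedes it below -/
import Mathlib

section
/- Let (X,T) be a nontrivial weakly mixing dynamical system. Then the Lyapunov numbers satisfy 𝕃_{m,d} = 𝕃̄_{m,d} = diam(X) and 𝕃_{m,r} = 𝕃̄_{m,r} > 0. -/
open Filter Topology Set Metric

section Defs

variable {X : Type*}

/-- A set is "opene" if it is open and nonempty. -/
def Opene [TopologicalSpace X] (U : Set X) : Prop := IsOpen U ∧ U.Nonempty

/-- `N_T(U,V) = {n ∈ ℕ : U ∩ T⁻ⁿV ≠ ∅}`. -/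
def NTset (T : X → X) (U V : Set X) : Set ℕ := {n | (U ∩ T^[n] ⁻¹' V).Nonempty}

/-- `N_T(x,G) = {n ∈ ℕ : Tⁿx ∈ G}`. -/
def NTpt (T : X → X) (x : X) (G : Set X) : Set ℕ := {n | T^[n] x ∈ G}

/-- `ω_{N_T}(x)`. -/
def omegaNT [TopologicalSpace X] (T : X → X) (x : X) : Set X :=
  {z | ∀ G : Set X, IsOpen G → z ∈ G → ∀ U V : Set X, Opene U → Opene V →
    (NTpt T x G ∩ NTset T U V).Nonempty}

/-- The ω-limit set `ω_T(x)`. -/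
def omegaT [TopologicalSpace X] (T : X → X) (x : X) : Set X :=
  {z | ∀ G : Set X, IsOpen G → z ∈ G → (NTpt T x G).Infinite}

/-- Transitive compact system. -/
def TransCompact [TopologicalSpace X] (T : X → X) : Prop :=
  ∀ x : X, (omegaNT T x).Nonempty

/-- Topologically transitive system. -/
def TopTransitive [TopologicalSpace X] (T : X → X) : Prop :=
  ∀ U V : Set X, Opene U → Opene V → (NTset T U V).Nonempty

/-- Weakly mixing: the product system `(X×X, T×T)` is topologically transitive. -/
def WeaklyMixing [TopologicalSpace X] (T : X → X) : Prop :=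
  TopTransitive (fun p : X × X => (T p.1, T p.2))

/-- Totally transitive: `(X, T^k)` is transitive for every `k ≥ 1`. -/
def TotallyTransitive [TopologicalSpace X] (T : X → X) : Prop :=
  ∀ k : ℕ, 1 ≤ k → TopTransitive (T^[k])

/-- Minimal system: every point has dense orbit. -/
def MinimalSystem [TopologicalSpace X] (T : X → X) : Prop :=
  ∀ x : X, Dense (Set.range fun n : ℕ => T^[n] x)

/-- A minimal subset: nonempty, closed, `T M = M`, with no proper nonempty closed invariant subset. -/
def IsMinimalSubset [TopologicalSpace X] (T : X → X) (M : Set X) : Prop :=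
  M.Nonempty ∧ IsClosed M ∧ T '' M = M ∧
    ∀ M' : Set X, M' ⊆ M → M'.Nonempty → IsClosed M' → T '' M' = M' → M' = M

/-- A minimal point: one that lies in some minimal subset. -/
def IsMinimalPoint [TopologicalSpace X] (T : X → X) (x : X) : Prop :=
  ∃ M : Set X, IsMinimalSubset T M ∧ x ∈ M

/-- An M-system: transitive with a dense set of minimal points. -/
def MSystem [TopologicalSpace X] (T : X → X) : Prop :=
  TopTransitive T ∧ Dense {x : X | IsMinimalPoint T x}

/-- Thick subset of ℕ. -/
def ThickSet (S : Set ℕ) : Prop := ∀ N : ℕ, ∃ m : ℕ, ∀ i ≤ N, m + i ∈ S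

/-- Syndetic subset of ℕ. -/
def SyndeticSet (S : Set ℕ) : Prop := ∃ N : ℕ, ∀ i : ℕ, ∃ j ≤ N, i + j ∈ S

/-- Thickly syndetic subset of ℕ. -/
def ThicklySyndeticSet (S : Set ℕ) : Prop :=
  ∀ N : ℕ, SyndeticSet {m : ℕ | ∀ i ≤ N, m + i ∈ S}

/-- `S_T(U,δ)`. -/
def STset [MetricSpace X] (T : X → X) (U : Set X) (δ : ℝ) : Set ℕ :=
  {n | ∃ x ∈ U, ∃ y ∈ U, δ < dist (T^[n] x) (T^[n] y)}

/-- Thickly sensitive system. -/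
def ThicklySensitive [MetricSpace X] (T : X → X) : Prop :=
  ∃ δ : ℝ, 0 < δ ∧ ∀ U : Set X, Opene U → ThickSet (STset T U δ)

/-- Thickly syndetically sensitive system. -/
def ThicklySyndeticallySensitive [MetricSpace X] (T : X → X) : Prop :=
  ∃ δ : ℝ, 0 < δ ∧ ∀ U : Set X, Opene U → ThicklySyndeticSet (STset T U δ)

/-- Multi-sensitive system. -/
def MultiSensitive [MetricSpace X] (T : X → X) : Prop :=
  ∃ δ : ℝ, 0 < δ ∧ ∀ (k : ℕ) (U : Fin (k + 1) → Set X), (∀ i, Opene (U i)) →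
    (⋂ i, STset T (U i) δ).Nonempty

/-- Thickly syndetically transitive system. -/
def ThicklySyndeticallyTransitive [TopologicalSpace X] (T : X → X) : Prop :=
  ∀ U V : Set X, Opene U → Opene V → ThicklySyndeticSet (NTset T U V)

/-- A proximal pair: `liminf d(Tⁿx,Tⁿy) = 0`. -/
def ProximalPair [MetricSpace X] (T : X → X) (x y : X) : Prop :=
  liminf (fun n : ℕ => dist (T^[n] x) (T^[n] y)) atTop = 0

/-- A proximal system: every pair of points is proximal. -/
def ProximalSystem [MetricSpace X] (T : X → X) : Prop :=
  ∀ x y : X, ProximalPair T x y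

/-- The proximal cell of `x`. -/
def ProxCell [MetricSpace X] (T : X → X) (x : X) : Set X :=
  {y | ProximalPair T x y}

/-- Li-Yorke sensitivity. -/
def LiYorkeSensitive [MetricSpace X] (T : X → X) : Prop :=
  ∃ δ : ℝ, 0 < δ ∧ ∀ x : X, ∀ U ∈ 𝓝 x, ∃ y ∈ U,
    liminf (fun n : ℕ => dist (T^[n] x) (T^[n] y)) atTop = 0 ∧
    δ < limsup (fun n : ℕ => dist (T^[n] x) (T^[n] y)) atTop

/-- Spatio-temporally chaotic system. -/
def SpatioTemporallyChaotic [MetricSpace X] (T : X → X) : Prop :=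
  ∀ x : X, ∀ U ∈ 𝓝 x, ∃ y ∈ U,
    liminf (fun n : ℕ => dist (T^[n] x) (T^[n] y)) atTop = 0 ∧
    0 < limsup (fun n : ℕ => dist (T^[n] x) (T^[n] y)) atTop

/-- A distal point: not proximal to any other point of its orbit closure. -/
def IsDistalPoint [MetricSpace X] (T : X → X) (x : X) : Prop :=
  ∀ y ∈ closure (Set.range fun n : ℕ => T^[n] x), y ≠ x →
    0 < liminf (fun n : ℕ => dist (T^[n] x) (T^[n] y)) atTop

/-- The Lyapunov number `𝕃_r`. -/
noncomputable def LyapR [MetricSpace X] (T : X → X) : ℝ :=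
  sSup {δ : ℝ | 0 < δ ∧ ∀ x : X, ∀ U : Set X, IsOpen U → x ∈ U →
    ∃ y ∈ U, ∃ n : ℕ, δ < dist (T^[n] x) (T^[n] y)}

/-- The Lyapunov number `𝕃̄_r`. -/
noncomputable def LyapRbar [MetricSpace X] (T : X → X) : ℝ :=
  sSup {δ : ℝ | 0 < δ ∧ ∀ x : X, ∀ U : Set X, IsOpen U → x ∈ U →
    ∃ y ∈ U, δ < limsup (fun n : ℕ => dist (T^[n] x) (T^[n] y)) atTop}

/-- `min_{1≤i≤k} d(Tⁿ xᵢ, Tⁿ yᵢ)`. -/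
noncomputable def minDist [MetricSpace X] (T : X → X) {k : ℕ}
    (x y : Fin (k + 1) → X) (n : ℕ) : ℝ :=
  Finset.univ.inf' Finset.univ_nonempty (fun i => dist (T^[n] (x i)) (T^[n] (y i)))

/-- The Lyapunov number `𝕃_{m,r}`. -/
noncomputable def LyapMR [MetricSpace X] (T : X → X) : ℝ :=
  sSup {δ : ℝ | 0 < δ ∧ ∀ (k : ℕ) (x : Fin (k + 1) → X) (U : Fin (k + 1) → Set X),
    (∀ i, IsOpen (U i) ∧ x i ∈ U i) →
    ∃ y : Fin (k + 1) → X, (∀ i, y i ∈ U i) ∧ ∃ n : ℕ, δ < minDist T x y n}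

/-- The Lyapunov number `𝕃̄_{m,r}`. -/
noncomputable def LyapMRbar [MetricSpace X] (T : X → X) : ℝ :=
  sSup {δ : ℝ | 0 < δ ∧ ∀ (k : ℕ) (x : Fin (k + 1) → X) (U : Fin (k + 1) → Set X),
    (∀ i, IsOpen (U i) ∧ x i ∈ U i) →
    ∃ y : Fin (k + 1) → X, (∀ i, y i ∈ U i) ∧
      δ < limsup (fun n : ℕ => minDist T x y n) atTop}

/-- The Lyapunov number `𝕃_{m,d}`. -/
noncomputable def LyapMD [MetricSpace X] (T : X → X) : ℝ :=
  sSup {δ : ℝ | 0 < δ ∧ ∀ (k : ℕ) (U : Fin (k + 1) → Set X), (∀ i, Opene (U i)) →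
    ∃ x y : Fin (k + 1) → X, (∀ i, x i ∈ U i ∧ y i ∈ U i) ∧ ∃ n : ℕ, δ < minDist T x y n}

/-- The Lyapunov number `𝕃̄_{m,d}`. -/
noncomputable def LyapMDbar [MetricSpace X] (T : X → X) : ℝ :=
  sSup {δ : ℝ | 0 < δ ∧ ∀ (k : ℕ) (U : Fin (k + 1) → Set X), (∀ i, Opene (U i)) →
    ∃ x y : Fin (k + 1) → X, (∀ i, x i ∈ U i ∧ y i ∈ U i) ∧
      δ < limsup (fun n : ℕ => minDist T x y n) atTop}

/-- `(k,T,ε)`-separated set with respect to the sequence `ns` (with `ns 0 = 0` by convention). -/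
def IsSepSet [MetricSpace X] (T : X → X) (ns : ℕ → ℕ) (k : ℕ) (ε : ℝ) (E : Set X) : Prop :=
  ∀ x ∈ E, ∀ y ∈ E, x ≠ y → ∃ j < k, ε < dist (T^[ns j] x) (T^[ns j] y)

/-- `sep(k,T,ε)`: maximal cardinality of a `(k,T,ε)`-separated set. -/
noncomputable def sepNum [MetricSpace X] (T : X → X) (ns : ℕ → ℕ) (k : ℕ) (ε : ℝ) : ℕ :=
  sSup {r : ℕ | ∃ E : Finset X, IsSepSet T ns k ε ↑E ∧ E.card = r}

/-- Topological sequence entropy along `ns`: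
`h_N(T) = lim_{ε→0} limsup_{k→∞} (1/k) log sep(k,T,ε)` (the limit as `ε → 0⁺` of the
nonincreasing-in-`ε` quantity, i.e. the supremum over `ε > 0`). -/
noncomputable def seqEntropy [MetricSpace X] (T : X → X) (ns : ℕ → ℕ) : EReal :=
  ⨆ (ε : ℝ) (_ : 0 < ε),
    limsup (fun k : ℕ => ((Real.log (sepNum T ns k ε) / k : ℝ) : EReal)) atTop

end Defs

/-!
Weak mixing implies weak mixing of all orders (Furstenberg): finitely many pairs of opene sets
are hit at a common, arbitrarily large time. Sending finitely many opene sets simultaneously near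
two points at almost maximal distance gives `𝕃_{m,d} = diam X`; Baire's theorem turns "at
arbitrarily large times" into "infinitely often for a generic tuple", giving `𝕃̄_{m,d} = diam X`.
Sending them near two points at distance `> diam X / 2` gives `𝕃_{m,r} ≥ diam X / 2 > 0`.
Finally, if `δ` is a constant for `𝕃_{m,r}`, compactness makes finitely many separation
witnesses serve all tuples; transporting an opene box near all of them at one large time and
applying Baire's theorem again shows that every `δ' < δ` is a constant for `𝕃̄_{m,r}`.
-/

section Transitivity

variable {X : Type*} [TopologicalSpace X] {T : X → X}

theorem WeaklyMixing.exists_pair_nonempty (hwm : WeaklyMixing T) {U₁ U₂ V₁ V₂ : Set X}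
    (hU₁ : Opene U₁) (hU₂ : Opene U₂) (hV₁ : Opene V₁) (hV₂ : Opene V₂) :
    ∃ n, (U₁ ∩ T^[n] ⁻¹' V₁).Nonempty ∧ (U₂ ∩ T^[n] ⁻¹' V₂).Nonempty := by
  obtain ⟨n, p, ⟨hp₁, hp₂⟩, hpV⟩ := hwm (U₁ ×ˢ U₂) (V₁ ×ˢ V₂)
    ⟨hU₁.1.prod hU₂.1, hU₁.2.prod hU₂.2⟩ ⟨hV₁.1.prod hV₂.1, hV₁.2.prod hV₂.2⟩
  have hpV : (T^[n] p.1, T^[n] p.2) ∈ V₁ ×ˢ V₂ := by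
    rwa [mem_preimage, show (fun q : X × X => (T q.1, T q.2)) = Prod.map T T from rfl,
      Prod.map_iterate] at hpV
  exact ⟨n, ⟨p.1, hp₁, hpV.1⟩, ⟨p.2, hp₂, hpV.2⟩⟩

/-- Furstenberg's intersection lemma. -/
theorem WeaklyMixing.exists_opene_forall_nonempty [Nonempty X] (hTc : Continuous T)
    (hwm : WeaklyMixing T) {ι : Type*} {P Q : ι → Set X} (hP : ∀ i, Opene (P i))
    (hQ : ∀ i, Opene (Q i)) (s : Finset ι) :
    ∃ U V : Set X, Opene U ∧ Opene V ∧
      ∀ n, (U ∩ T^[n] ⁻¹' V).Nonempty → ∀ i ∈ s, (P i ∩ T^[n] ⁻¹' Q i).Nonempty := by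
  induction s using Finset.cons_induction with
  | empty => exact ⟨univ, univ, ⟨isOpen_univ, univ_nonempty⟩, ⟨isOpen_univ, univ_nonempty⟩,
      fun _ _ i hi => absurd hi (Finset.notMem_empty i)⟩
  | cons j s _ ih =>
    obtain ⟨U, V, hU, hV, hUV⟩ := ih
    obtain ⟨m, ⟨u, huU, huP⟩, ⟨v, hvV, hvQ⟩⟩ := hwm.exists_pair_nonempty hU hV (hP j) (hQ j)
    refine ⟨U ∩ T^[m] ⁻¹' P j, V ∩ T^[m] ⁻¹' Q j,
      ⟨hU.1.inter ((hP j).1.preimage (hTc.iterate m)), u, huU, huP⟩,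
      ⟨hV.1.inter ((hQ j).1.preimage (hTc.iterate m)), v, hvV, hvQ⟩, ?_⟩
    rintro n ⟨w, ⟨hwU, hwP⟩, hwV, hwQ⟩ i hi
    rcases Finset.mem_cons.1 hi with rfl | hi
    · refine ⟨T^[m] w, hwP, ?_⟩
      rwa [mem_preimage, ← Function.iterate_add_apply, add_comm, Function.iterate_add_apply]
    · exact hUV n ⟨w, hwU, hwV⟩ i hi

theorem WeaklyMixing.exists_ge_forall_nonempty [Nonempty X] (hTc : Continuous T)
    (hTs : Function.Surjective T) (hwm : WeaklyMixing T) {ι : Type*} [Finite ι]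
    {P Q : ι → Set X} (hP : ∀ i, Opene (P i)) (hQ : ∀ i, Opene (Q i)) (N : ℕ) :
    ∃ n ≥ N, ∀ i, (P i ∩ T^[n] ⁻¹' Q i).Nonempty := by
  cases nonempty_fintype ι
  obtain ⟨U, V, hU, hV, hUV⟩ := hwm.exists_opene_forall_nonempty hTc hP hQ Finset.univ
  have hV' : Opene (T^[N] ⁻¹' V) :=
    ⟨hV.1.preimage (hTc.iterate N), hV.2.preimage (hTs.iterate N)⟩
  obtain ⟨m, -, w, hwU, hwV⟩ := hwm.exists_pair_nonempty hU hU hV' hV'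
  refine ⟨N + m, Nat.le_add_right N m, fun i => hUV _ ⟨w, hwU, ?_⟩ i (Finset.mem_univ i)⟩
  rwa [mem_preimage, Function.iterate_add_apply]

end Transitivity

section Topology

variable {X : Type*} [TopologicalSpace X]

theorem exists_univ_pi_subset {ι : Type*} [Finite ι] {W : Set (ι → X)} (hW : IsOpen W)
    (hne : W.Nonempty) : ∃ B : ι → Set X, (∀ i, Opene (B i)) ∧ univ.pi B ⊆ W := by
  obtain ⟨x, hx⟩ := hne
  obtain ⟨B, hB, hBW⟩ := isOpen_pi_iff'.1 hW x hx
  exact ⟨B, fun i => ⟨(hB i).1, x i, (hB i).2⟩, hBW⟩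

theorem exists_univ_pi_prod_univ_pi_subset {ι : Type*} [Finite ι] {W : Set ((ι → X) × (ι → X))}
    (hW : IsOpen W) (hne : W.Nonempty) :
    ∃ B₁ B₂ : ι → Set X, (∀ i, Opene (B₁ i)) ∧ (∀ i, Opene (B₂ i)) ∧
      univ.pi B₁ ×ˢ univ.pi B₂ ⊆ W := by
  obtain ⟨⟨x, y⟩, hxy⟩ := hne
  obtain ⟨u, v, hu, hv, hxu, hyv, huv⟩ := isOpen_prod_iff.1 hW x y hxy
  obtain ⟨B₁, hB₁, hB₁u⟩ := exists_univ_pi_subset hu ⟨x, hxu⟩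
  obtain ⟨B₂, hB₂, hB₂v⟩ := exists_univ_pi_subset hv ⟨y, hyv⟩
  exact ⟨B₁, B₂, hB₁, hB₂, (prod_mono hB₁u hB₂v).trans huv⟩

theorem dense_setOf_frequently_lt [BaireSpace X] {φ : ℕ → X → ℝ} (hφ : ∀ n, Continuous (φ n))
    {δ : ℝ} (h : ∀ W : Set X, IsOpen W → W.Nonempty → ∀ N, ∃ n ≥ N, ∃ y ∈ W, δ < φ n y) :
    Dense {y | ∃ᶠ n in atTop, δ < φ n y} := by
  set G : ℕ → Set X := fun N => ⋃ n ≥ N, {y | δ < φ n y}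
  have hG : ∀ N, IsOpen (G N) := fun N =>
    isOpen_biUnion fun n _ => isOpen_lt continuous_const (hφ n)
  have hGd : ∀ N, Dense (G N) := fun N => dense_iff_inter_open.2 fun W hW hne => by
    obtain ⟨n, hn, y, hyW, hy⟩ := h W hW hne N
    exact ⟨y, hyW, mem_biUnion hn hy⟩
  refine (dense_iInter_of_isOpen_nat hG hGd).mono fun y hy => frequently_atTop.2 fun N => ?_
  simpa [G] using mem_iInter.1 hy N

end Topology

theorem le_csSup_of_Ioo_subset {S : Set ℝ} {a b : ℝ} (hS : BddAbove S) (hab : a < b)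
    (h : Ioo a b ⊆ S) : b ≤ sSup S :=
  csSup_Ioo hab ▸ csSup_le_csSup hS (nonempty_Ioo.2 hab) h

theorem csSup_eq_of_Ioo_subset_of_forall_le {S : Set ℝ} {b : ℝ} (hb : 0 < b) (h : Ioo 0 b ⊆ S)
    (hle : ∀ δ ∈ S, δ ≤ b) : sSup S = b :=
  le_antisymm (csSup_le (nonempty_Ioo.2 hb |>.mono h) hle) (le_csSup_of_Ioo_subset ⟨b, hle⟩ hb h)

theorem csSup_eq_csSup_of_forall_Ioo_subset {S S' : Set ℝ} (hS : BddAbove S) (hS'S : S' ⊆ S)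
    (hpos : ∀ δ ∈ S, 0 < δ) (hSS' : ∀ δ ∈ S, Ioo 0 δ ⊆ S') : sSup S' = sSup S := by
  rcases S.eq_empty_or_nonempty with rfl | ⟨δ, hδ⟩
  · rw [subset_empty_iff.1 hS'S]
  have hS' : S'.Nonempty := nonempty_Ioo.2 (hpos δ hδ) |>.mono (hSS' δ hδ)
  exact le_antisymm (csSup_le_csSup hS hS' hS'S) <| csSup_le ⟨δ, hδ⟩ fun δ hδ =>
    le_csSup_of_Ioo_subset (hS.mono hS'S) (hpos δ hδ) (hSS' δ hδ)

section Metric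

variable {X : Type*} [MetricSpace X] {T : X → X}

theorem exists_lt_dist_of_lt_diam_univ [Nonempty X] {r : ℝ} (hr : r < diam (univ : Set X)) :
    ∃ a b : X, r < dist a b := by
  by_contra! h
  have hr₀ : 0 ≤ r := dist_self (Classical.arbitrary X) ▸ h _ _
  exact hr.not_ge (diam_le_of_forall_dist_le hr₀ fun a _ b _ => h a b)

theorem lt_dist_or_lt_dist_of_two_mul_lt_dist {a b : X} {r : ℝ} (hab : 2 * r < dist a b)
    (p : X) : r < dist p a ∨ r < dist p b := by
  by_contra! h
  linarith [dist_triangle_left a b p]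

section MinDist

variable {k : ℕ} {x y : Fin (k + 1) → X} {n : ℕ} {δ : ℝ}

theorem lt_minDist_iff : δ < minDist T x y n ↔ ∀ i, δ < dist (T^[n] (x i)) (T^[n] (y i)) := by
  simp [minDist, Finset.lt_inf'_iff]

theorem minDist_nonneg : 0 ≤ minDist T x y n :=
  Finset.le_inf' _ _ fun _ _ => dist_nonneg

theorem continuous_minDist (hTc : Continuous T) (n : ℕ) :
    Continuous fun p : (Fin (k + 1) → X) × (Fin (k + 1) → X) => minDist T p.1 p.2 n :=
  Continuous.finset_inf'_apply _ fun i _ =>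
    ((hTc.iterate n).comp ((continuous_apply i).comp continuous_fst)).dist
      ((hTc.iterate n).comp ((continuous_apply i).comp continuous_snd))

theorem exists_lt_minDist_of_lt_limsup (h : δ < limsup (fun n => minDist T x y n) atTop) :
    ∃ n, δ < minDist T x y n :=
  (frequently_lt_of_lt_limsup
    (isBoundedUnder_of ⟨0, fun _ => minDist_nonneg⟩).isCoboundedUnder_le h).exists

variable [CompactSpace X]

theorem minDist_le_diam : minDist T x y n ≤ diam (univ : Set X) :=
  (Finset.inf'_le _ (Finset.mem_univ 0)).trans
    (dist_le_diam_of_mem isCompact_univ.isBounded (mem_univ _) (mem_univ _))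

theorem lt_limsup_minDist_of_frequently {δ' : ℝ} (hδ : δ < δ')
    (h : ∃ᶠ n in atTop, δ' < minDist T x y n) :
    δ < limsup (fun n => minDist T x y n) atTop :=
  hδ.trans_le <| le_limsup_of_frequently_le (h.mono fun _ => le_of_lt)
    (isBoundedUnder_of ⟨_, fun _ => minDist_le_diam⟩)

end MinDist

theorem WeaklyMixing.exists_ge_lt_dist [Nonempty X] (hTc : Continuous T)
    (hTs : Function.Surjective T) (hwm : WeaklyMixing T) {δ : ℝ} (hδ : δ < diam (univ : Set X))
    {ι : Type*} [Finite ι]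
    {W₁ W₂ : ι → Set X} (hW₁ : ∀ i, Opene (W₁ i)) (hW₂ : ∀ i, Opene (W₂ i)) (N : ℕ) :
    ∃ n ≥ N, ∃ x y : ι → X, (∀ i, x i ∈ W₁ i ∧ y i ∈ W₂ i) ∧
      ∀ i, δ < dist (T^[n] (x i)) (T^[n] (y i)) := by
  set η := (diam (univ : Set X) - δ) / 3
  have hη : 0 < η := by simp only [η]; linarith
  obtain ⟨a, b, hab⟩ := exists_lt_dist_of_lt_diam_univ (show δ + 2 * η < diam (univ : Set X) by
    simp only [η]; linarith)
  obtain ⟨n, hn, hmt⟩ := hwm.exists_ge_forall_nonempty hTc hTs (ι := ι × Bool)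
    (P := fun j => cond j.2 (W₁ j.1) (W₂ j.1)) (Q := fun j => ball (cond j.2 a b) η)
    (fun | (i, true) => hW₁ i | (i, false) => hW₂ i)
    (fun _ => ⟨isOpen_ball, nonempty_ball.2 hη⟩) N
  choose g hgW hgB using hmt
  refine ⟨n, hn, fun i => g (i, true), fun i => g (i, false),
    fun i => ⟨hgW (i, true), hgW (i, false)⟩, fun i => ?_⟩
  have ha : dist a (T^[n] (g (i, true))) < η := mem_ball'.1 (hgB (i, true))
  have hb : dist (T^[n] (g (i, false))) b < η := mem_ball.1 (hgB (i, false))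
  show δ < dist (T^[n] (g (i, true))) (T^[n] (g (i, false)))
  linarith [dist_triangle4 a (T^[n] (g (i, true))) (T^[n] (g (i, false))) b]

theorem WeaklyMixing.exists_lt_dist_of_two_mul_lt_diam [Nonempty X] (hTc : Continuous T)
    (hTs : Function.Surjective T) (hwm : WeaklyMixing T) {δ : ℝ}
    (hδ : 2 * δ < diam (univ : Set X)) {ι : Type*} [Finite ι] (x : ι → X) {U : ι → Set X}
    (hU : ∀ i, Opene (U i)) :
    ∃ y : ι → X, (∀ i, y i ∈ U i) ∧ ∃ n, ∀ i, δ < dist (T^[n] (x i)) (T^[n] (y i)) := by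
  set η := (diam (univ : Set X) - 2 * δ) / 4
  have hη : 0 < η := by simp only [η]; linarith
  obtain ⟨a, b, hab⟩ := exists_lt_dist_of_lt_diam_univ (show 2 * (δ + η) < diam (univ : Set X) by
    simp only [η]; linarith)
  obtain ⟨n, -, hmt⟩ := hwm.exists_ge_forall_nonempty hTc hTs (ι := ι × Bool)
    (P := fun j => U j.1) (Q := fun j => ball (cond j.2 a b) η)
    (fun j => hU j.1) (fun _ => ⟨isOpen_ball, nonempty_ball.2 hη⟩) 0
  choose g hgU hgB using hmt
  have hfar : ∀ i, ∃ c : Bool, δ + η < dist (T^[n] (x i)) (cond c a b) := fun i =>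
    (lt_dist_or_lt_dist_of_two_mul_lt_dist hab (T^[n] (x i))).elim
      (⟨true, ·⟩) (⟨false, ·⟩)
  choose c hc using hfar
  refine ⟨fun i => g (i, c i), fun i => hgU (i, c i), n, fun i => ?_⟩
  linarith [hc i, mem_ball.1 (hgB (i, c i)),
    dist_triangle (T^[n] (x i)) (T^[n] (g (i, c i))) (cond (c i) a b)]

variable [CompactSpace X]

theorem diam_univ_pos [Nontrivial X] : 0 < diam (univ : Set X) :=
  diam_pos nontrivial_univ isCompact_univ.isBounded

theorem exists_finite_forall_exists_lt_dist (hTc : Continuous T) {ι : Type*} [Finite ι]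
    {δ δ' : ℝ} (hδ' : δ' < δ)
    (h : ∀ p : ι → X, ∃ y : ι → X, ∃ m, ∀ i, δ < dist (T^[m] (p i)) (T^[m] (y i))) :
    ∃ s : Set ((ι → X) × ℕ), s.Finite ∧
      ∀ p : ι → X, ∃ c ∈ s, ∀ i, δ' < dist (T^[c.2] (p i)) (T^[c.2] (c.1 i)) := by
  choose y m hym using h
  set O : (ι → X) → Set (ι → X) := fun p =>
    ⋂ i, {q | δ' < dist (T^[m p] (q i)) (T^[m p] (y p i))}
  have hO : ∀ p, IsOpen (O p) := fun p => isOpen_iInter_of_finite fun i =>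
    isOpen_lt continuous_const (((hTc.iterate _).comp (continuous_apply i)).dist continuous_const)
  obtain ⟨t, ht⟩ := isCompact_univ.elim_finite_subcover O hO fun q _ =>
    mem_iUnion.2 ⟨q, mem_iInter.2 fun i => hδ'.trans (hym q i)⟩
  refine ⟨(fun p => (y p, m p)) '' t, t.finite_toSet.image _, fun q => ?_⟩
  obtain ⟨p, hp, hqp⟩ := mem_iUnion₂.1 (ht (mem_univ q))
  exact ⟨_, mem_image_of_mem _ hp, mem_iInter.1 hqp⟩

theorem WeaklyMixing.exists_ge_lt_dist_of_forall_exists_lt_dist [Nonempty X]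
    (hTc : Continuous T) (hTs : Function.Surjective T) (hwm : WeaklyMixing T) {ι : Type*}
    [Finite ι] {δ δ' : ℝ} (hδ' : δ' < δ)
    (h : ∀ p : ι → X, ∃ y : ι → X, ∃ m, ∀ i, δ < dist (T^[m] (p i)) (T^[m] (y i)))
    (x : ι → X) {W : ι → Set X} (hW : ∀ i, Opene (W i)) (N : ℕ) :
    ∃ n ≥ N, ∃ z : ι → X, (∀ i, z i ∈ W i) ∧ ∀ i, δ' < dist (T^[n] (x i)) (T^[n] (z i)) := by
  set e := (δ - δ') / 2
  have he : 0 < e := by simp only [e]; linarith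
  have hδ'e : δ' = δ - 2 * e := by simp only [e]; ring
  obtain ⟨s, hs, hsep⟩ :=
    exists_finite_forall_exists_lt_dist hTc (show δ - e < δ by linarith) h
  have : Finite s := hs
  -- send each `W i` near every witness `c.1 i`, at one common time `n₀`
  obtain ⟨n₀, hn₀, hmt⟩ := hwm.exists_ge_forall_nonempty hTc hTs (ι := ι × s)
    (P := fun j => W j.1) (Q := fun j => T^[j.2.1.2] ⁻¹' ball (T^[j.2.1.2] (j.2.1.1 j.1)) e)
    (fun j => hW j.1)
    (fun j => ⟨isOpen_ball.preimage (hTc.iterate _), _, mem_ball_self he⟩) N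
  choose g hgW hgB using hmt
  obtain ⟨c, hc, hcsep⟩ := hsep fun i => T^[n₀] (x i)
  refine ⟨c.2 + n₀, le_add_left hn₀, fun i => g (i, ⟨c, hc⟩), fun i => hgW (i, ⟨c, hc⟩),
    fun i => ?_⟩
  have hgc : dist (T^[c.2] (T^[n₀] (g (i, ⟨c, hc⟩)))) (T^[c.2] (c.1 i)) < e :=
    mem_ball.1 (hgB (i, ⟨c, hc⟩))
  show δ' < dist (T^[c.2 + n₀] (x i)) (T^[c.2 + n₀] (g (i, ⟨c, hc⟩)))
  rw [Function.iterate_add_apply, Function.iterate_add_apply]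
  linarith [hcsep i, dist_triangle (T^[c.2] (T^[n₀] (x i))) (T^[c.2] (T^[n₀] (g (i, ⟨c, hc⟩))))
    (T^[c.2] (c.1 i))]

theorem WeaklyMixing.exists_lt_limsup_minDist [Nonempty X] (hTc : Continuous T)
    (hTs : Function.Surjective T) (hwm : WeaklyMixing T) {k : ℕ} {δ δ' : ℝ} (hδ' : δ' < δ)
    (h : ∀ p : Fin (k + 1) → X, ∃ y : Fin (k + 1) → X, ∃ m,
      ∀ i, δ < dist (T^[m] (p i)) (T^[m] (y i)))
    (x : Fin (k + 1) → X) {U : Fin (k + 1) → Set X} (hU : ∀ i, IsOpen (U i) ∧ x i ∈ U i) :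
    ∃ y : Fin (k + 1) → X, (∀ i, y i ∈ U i) ∧ δ' < limsup (fun n => minDist T x y n) atTop := by
  obtain ⟨δ'', hδ'δ'', hδ''δ⟩ := exists_between hδ'
  have hdense := dense_setOf_frequently_lt (φ := fun n y => minDist T x y n) (δ := δ'')
    (fun n => (continuous_minDist hTc n).comp (Continuous.prodMk_right x))
    fun W hW hne N => by
      obtain ⟨B, hB, hBW⟩ := exists_univ_pi_subset hW hne
      obtain ⟨n, hn, z, hzB, hz⟩ :=
        hwm.exists_ge_lt_dist_of_forall_exists_lt_dist hTc hTs hδ''δ h x hB N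
      exact ⟨n, hn, z, hBW fun i _ => hzB i, lt_minDist_iff.2 hz⟩
  obtain ⟨y, hyU, hy⟩ := hdense.inter_open_nonempty (univ.pi U)
    (isOpen_set_pi finite_univ fun i _ => (hU i).1) ⟨x, fun i _ => (hU i).2⟩
  exact ⟨y, fun i => hyU i trivial, lt_limsup_minDist_of_frequently hδ'δ'' hy⟩

variable [Nontrivial X]

theorem WeaklyMixing.lyapMD_eq_diam (hTc : Continuous T) (hTs : Function.Surjective T)
    (hwm : WeaklyMixing T) : LyapMD T = diam (univ : Set X) := by
  refine csSup_eq_of_Ioo_subset_of_forall_le diam_univ_pos ?_ ?_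
  · rintro δ ⟨hδ, hδD⟩
    refine ⟨hδ, fun k U hU => ?_⟩
    obtain ⟨n, -, x, y, hxy, hd⟩ := hwm.exists_ge_lt_dist hTc hTs hδD hU hU 0
    exact ⟨x, y, hxy, n, lt_minDist_iff.2 hd⟩
  · rintro δ ⟨-, h⟩
    obtain ⟨x, y, -, n, hn⟩ := h 0 (fun _ => univ) fun _ => ⟨isOpen_univ, univ_nonempty⟩
    exact hn.le.trans minDist_le_diam

theorem WeaklyMixing.lyapMDbar_eq_diam (hTc : Continuous T) (hTs : Function.Surjective T)
    (hwm : WeaklyMixing T) : LyapMDbar T = diam (univ : Set X) := by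
  refine csSup_eq_of_Ioo_subset_of_forall_le diam_univ_pos ?_ ?_
  · rintro δ ⟨hδ, hδD⟩
    refine ⟨hδ, fun k U hU => ?_⟩
    obtain ⟨δ', hδδ', hδ'D⟩ := exists_between hδD
    have hdense := dense_setOf_frequently_lt (δ := δ') (continuous_minDist (k := k) hTc)
      fun W hW hne N => by
        obtain ⟨B₁, B₂, hB₁, hB₂, hBW⟩ := exists_univ_pi_prod_univ_pi_subset hW hne
        obtain ⟨n, hn, x, y, hxy, hd⟩ := hwm.exists_ge_lt_dist hTc hTs hδ'D hB₁ hB₂ N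
        exact ⟨n, hn, (x, y), hBW ⟨fun i _ => (hxy i).1, fun i _ => (hxy i).2⟩,
          lt_minDist_iff.2 hd⟩
    have hUpi : Opene (univ.pi U) :=
      ⟨isOpen_set_pi finite_univ fun i _ => (hU i).1, univ_pi_nonempty_iff.2 fun i => (hU i).2⟩
    obtain ⟨⟨x, y⟩, ⟨hx, hy⟩, hxy⟩ :=
      hdense.inter_open_nonempty _ (hUpi.1.prod hUpi.1) (hUpi.2.prod hUpi.2)
    exact ⟨x, y, fun i => ⟨hx i trivial, hy i trivial⟩, lt_limsup_minDist_of_frequently hδδ' hxy⟩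
  · rintro δ ⟨-, h⟩
    obtain ⟨x, y, -, hlim⟩ := h 0 (fun _ => univ) fun _ => ⟨isOpen_univ, univ_nonempty⟩
    obtain ⟨n, hn⟩ := exists_lt_minDist_of_lt_limsup hlim
    exact hn.le.trans minDist_le_diam

theorem bddAbove_lyapMR_set :
    BddAbove {δ : ℝ | 0 < δ ∧ ∀ (k : ℕ) (x : Fin (k + 1) → X) (U : Fin (k + 1) → Set X),
      (∀ i, IsOpen (U i) ∧ x i ∈ U i) →
      ∃ y : Fin (k + 1) → X, (∀ i, y i ∈ U i) ∧ ∃ n : ℕ, δ < minDist T x y n} := by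
  refine ⟨diam (univ : Set X), ?_⟩
  rintro δ ⟨-, h⟩
  obtain ⟨y, -, n, hn⟩ := h 0 (fun _ => Classical.arbitrary X) (fun _ => univ)
    fun _ => ⟨isOpen_univ, trivial⟩
  exact hn.le.trans minDist_le_diam

theorem WeaklyMixing.lyapMR_eq_lyapMRbar (hTc : Continuous T) (hTs : Function.Surjective T)
    (hwm : WeaklyMixing T) : LyapMR T = LyapMRbar T := by
  refine (csSup_eq_csSup_of_forall_Ioo_subset bddAbove_lyapMR_set ?_ (fun δ hδ => hδ.1) ?_).symm
  · rintro δ ⟨hδ, h⟩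
    refine ⟨hδ, fun k x U hU => ?_⟩
    obtain ⟨y, hy, hlim⟩ := h k x U hU
    exact ⟨y, hy, exists_lt_minDist_of_lt_limsup hlim⟩
  · rintro δ ⟨-, h⟩ δ' ⟨hδ', hδ'δ⟩
    refine ⟨hδ', fun k x U hU => hwm.exists_lt_limsup_minDist hTc hTs hδ'δ (fun p => ?_) x hU⟩
    obtain ⟨y, -, n, hn⟩ := h k p (fun _ => univ) fun _ => ⟨isOpen_univ, trivial⟩
    exact ⟨y, n, lt_minDist_iff.1 hn⟩

theorem WeaklyMixing.diam_div_two_le_lyapMR (hTc : Continuous T) (hTs : Function.Surjective T)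
    (hwm : WeaklyMixing T) : diam (univ : Set X) / 2 ≤ LyapMR T := by
  refine le_csSup_of_Ioo_subset bddAbove_lyapMR_set (half_pos diam_univ_pos) ?_
  rintro δ ⟨hδ, hδD⟩
  refine ⟨hδ, fun k x U hU => ?_⟩
  obtain ⟨y, hy, n, hn⟩ := hwm.exists_lt_dist_of_two_mul_lt_diam hTc hTs (δ := δ) (by linarith) x
    fun i => ⟨(hU i).1, x i, (hU i).2⟩
  exact ⟨y, hy, n, lt_minDist_iff.2 hn⟩

end Metric

theorem stmt15_general {X : Type*} [MetricSpace X] [CompactSpace X] [Nontrivial X]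
    {T : X → X} (hTc : Continuous T) (hTs : Function.Surjective T)
    (hwm : WeaklyMixing T) :
    LyapMD T = diam (Set.univ : Set X) ∧ LyapMDbar T = diam (Set.univ : Set X) ∧
    LyapMR T = LyapMRbar T ∧ 0 < LyapMR T :=
  ⟨hwm.lyapMD_eq_diam hTc hTs, hwm.lyapMDbar_eq_diam hTc hTs, hwm.lyapMR_eq_lyapMRbar hTc hTs,
    (half_pos diam_univ_pos).trans_le (hwm.diam_div_two_le_lyapMR hTc hTs)⟩

/-- For a nontrivial weakly mixing system,
`𝕃_{m,d} = 𝕃̄_{m,d} = diam X` and `𝕃_{m,r} = 𝕃̄_{m,r} > 0`. -/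
theorem stmt15 {X : Type*} [MetricSpace X] [CompactSpace X] [Nontrivial X]
    (hperf : ∀ x : X, (𝓝[≠] x).NeBot)
    {T : X → X} (hTc : Continuous T) (hTs : Function.Surjective T)
    (hwm : WeaklyMixing T) :
    LyapMD T = diam (Set.univ : Set X) ∧ LyapMDbar T = diam (Set.univ : Set X) ∧
    LyapMR T = LyapMRbar T ∧ 0 < LyapMR T :=
  stmt15_general hTc hTs hwm
end

section
/- Let (X,T) be a proximal dynamical system, let p ∈ X be its fixed point with a neighborhood U_p, and let x ∈ X. Then the set N_T(x, U_p) is thickly syndetic. -/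
open Filter Topology Set Metric

/-!
Proximality to the fixed point `p` makes every orbit enter every neighbourhood of `p`. By
compactness the visits of an orbit to an open `V ∋ p` are then syndetic: otherwise a cluster point
of the starts of ever longer gaps would have its whole orbit outside `V`. Applied to an open
`V ⊆ ⋂_{i ≤ N} T⁻ⁱ U`, a visit to `V` at time `m` gives visits to `U` at all times `m, …, m + N`.
-/

theorem SyndeticSet.mono {S S' : Set ℕ} (hS : SyndeticSet S) (h : S ⊆ S') : SyndeticSet S' :=
  let ⟨N, hN⟩ := hS
  ⟨N, fun i => let ⟨j, hj, hij⟩ := hN i; ⟨j, hj, h hij⟩⟩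

theorem syndeticSet_NTpt_of_forall_exists_iterate_mem {X : Type*} [TopologicalSpace X]
    [CompactSpace X] {T : X → X} (hT : Continuous T) {V : Set X} (hV : IsOpen V)
    (hvisit : ∀ z, ∃ n, T^[n] z ∈ V) (x : X) : SyndeticSet (NTpt T x V) := by
  by_contra hnot
  simp only [SyndeticSet, NTpt, mem_ofPred_eq, not_exists, not_forall, not_and] at hnot
  choose m hgap using hnot
  obtain ⟨z, -, hz⟩ := isCompact_univ.exists_mapClusterPt (f := atTop)
    (u := fun N => T^[m N] x) (by simp)
  obtain ⟨n, hn⟩ := hvisit z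
  have hcluster : MapClusterPt (T^[n] z) atTop (fun N => T^[n] (T^[m N] x)) :=
    hz.continuousAt_comp (hT.iterate n).continuousAt
  have hmiss : ∀ᶠ N in atTop, T^[n] (T^[m N] x) ∉ V := by
    filter_upwards [eventually_ge_atTop n] with N hN
    rw [← Function.iterate_add_apply, add_comm]
    exact hgap N n hN
  obtain ⟨N, hin, hout⟩ := ((hcluster.frequently (hV.mem_nhds hn)).and_eventually hmiss).exists
  exact hout hin

theorem ProximalPair.exists_iterate_mem_of_isFixedPt {X : Type*} [MetricSpace X] [BoundedSpace X]
    {T : X → X} {z p : X} (h : ProximalPair T z p) (hp : T p = p) {V : Set X} (hV : V ∈ 𝓝 p) :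
    ∃ n, T^[n] z ∈ V := by
  obtain ⟨δ, hδ, hδV⟩ := Metric.mem_nhds_iff.mp hV
  have hbdd : IsCoboundedUnder (· ≥ ·) atTop (fun n : ℕ => dist (T^[n] z) (T^[n] p)) :=
    (isBoundedUnder_of ⟨diam (univ : Set X), fun _ =>
      dist_le_diam_of_mem (Bornology.IsBounded.all _) (mem_univ _) (mem_univ _)⟩
    ).isCoboundedUnder_ge
  obtain ⟨n, hn⟩ := (frequently_lt_of_liminf_lt hbdd (h.symm ▸ hδ)).exists
  exact ⟨n, hδV (by simpa [Function.iterate_fixed hp] using hn)⟩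

theorem stmt18_general {X : Type*} [MetricSpace X] [CompactSpace X]
    {T : X → X} (hTc : Continuous T)
    (hprox : ProximalSystem T) (p : X) (hp : T p = p)
    (U : Set X) (hU : U ∈ 𝓝 p) (x : X) :
    ThicklySyndeticSet (NTpt T x U) := by
  intro N
  have hW : {y | ∀ i ≤ N, T^[i] y ∈ U} ∈ 𝓝 p := by
    simp only [← Finset.mem_range_succ_iff]
    refine (eventually_all_finset _).mpr fun i _ => (hTc.iterate i).continuousAt.preimage_mem_nhds ?_
    rwa [Function.iterate_fixed hp]
  obtain ⟨V, hVW, hVo, hpV⟩ := _root_.mem_nhds_iff.mp hW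
  refine (syndeticSet_NTpt_of_forall_exists_iterate_mem hTc hVo
    (fun z => (hprox z p).exists_iterate_mem_of_isFixedPt hp (hVo.mem_nhds hpV)) x).mono ?_
  intro m hm i hi
  simpa only [NTpt, mem_ofPred_eq, add_comm m, Function.iterate_add_apply] using hVW hm i hi

/-- In a proximal system with fixed point `p`, for any neighborhood `U` of `p`
and any point `x`, the set `N_T(x,U)` is thickly syndetic. -/
theorem stmt18 {X : Type*} [MetricSpace X] [CompactSpace X] [Nontrivial X]
    (hperf : ∀ x : X, (𝓝[≠] x).NeBot)
    {T : X → X} (hTc : Continuous T) (hTs : Function.Surjective T)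
    (hprox : ProximalSystem T) (p : X) (hp : T p = p)
    (U : Set X) (hU : U ∈ 𝓝 p) (x : X) :
    ThicklySyndeticSet (NTpt T x U) :=
  stmt18_general hTc hprox p hp U hU x
end
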